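/- Let a route consist of k maximal sections where section j has length L_j and minimal per-section pump requirement n_j computed from its own pressure profile, and suppose each section's inlet is at pressure p_max (enforced by a boundary pump or source). Then the total number of pumps needed for the whole route is Σ n_j, and this equals the minimum over all pump placements respecting the section boundaries; moreover Σ n_j ≥ ⌈(Σ L_j)·γ/(p_max − p_min)⌉ − 1, the bound for the undivided route, with equality when all section lengths are integer multiples of (p_max − p_min)/γ. -/

import Mathlib

open Finset

/-!
With `x j = L j γ / (p_max - p_min)` the length of section `j` in units of the maximal pump
spacing, a section-respecting placement with `c j` interior pumps in section `j` is feasible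
exactly when `x j ≤ c j + 1`, i.e. `⌈x j⌉ - 1 ≤ c j`; this bound is attained since `x j > 0`.
Adding the `k - 1` boundary pumps gives the total `∑ ⌈x j⌉ - 1 = ∑ n j`. Comparing with the
undivided route is subadditivity of the ceiling, `⌈∑ x j⌉ ≤ ∑ ⌈x j⌉`, an equality when every
`x j` is an integer.
-/

section Ceil

variable {α ι : Type*} [Ring α] [LinearOrder α] [FloorRing α]

theorem Int.ceil_sum_le [IsOrderedRing α] (s : Finset ι) (x : ι → α) :
    ⌈∑ i ∈ s, x i⌉ ≤ ∑ i ∈ s, ⌈x i⌉ :=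
  Int.ceil_le.2 <| by push_cast; exact sum_le_sum fun i _ => Int.le_ceil (x i)

theorem Int.toNat_ceil_sub_one_add_one [IsOrderedRing α] {x : α} (hx : 0 < x) :
    ((⌈x⌉ - 1).toNat : ℤ) + 1 = ⌈x⌉ := by
  have := Int.one_le_ceil_iff.2 hx
  omega

theorem Int.sum_ceil_le_sum_add_card (s : Finset ι) (x : ι → α) (c : ι → ℕ)
    (h : ∀ i ∈ s, x i ≤ c i + 1) : ∑ i ∈ s, ⌈x i⌉ ≤ ∑ i ∈ s, (c i : ℤ) + #s := by
  calc ∑ i ∈ s, ⌈x i⌉ ≤ ∑ i ∈ s, ((c i : ℤ) + 1) :=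
        sum_le_sum fun i hi => Int.ceil_le.2 <| by exact_mod_cast h i hi
    _ = ∑ i ∈ s, (c i : ℤ) + #s := by rw [sum_add_distrib, sum_const, nsmul_one]

end Ceil

theorem le_mul_div_iff_mul_div_le {α : Type*} [Field α] [LinearOrder α] [IsStrictOrderedRing α]
    {a b c d : α} (hc : 0 < c) (hd : 0 < d) :
    a ≤ b * (c / d) ↔ a * d / c ≤ b := by
  rw [← mul_div_assoc, le_div_iff₀ hd, div_le_iff₀ hc]

/-- Segmentation-based pump optimization under the linear loss model (rate
`γ`, window `[p_min, p_max]`, pumps restore to `p_max`, spacing at most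
`D = (p_max - p_min)/γ`).  A route is divided into `k` sections of lengths
`L j > 0`; each interior section boundary carries a boundary pump enforcing
inlet pressure `p_max`.  Attributing to section `j` its interior pumps plus
(for `j ≠ 0`) its inlet boundary pump gives
`n j = ⌈L j γ / (p_max - p_min)⌉ - (if j = 0 then 1 else 0)`.  Then the total
pump count `∑ n j` is the minimum over all section-respecting placements
(interior counts `pcnt j` with `L j ≤ (pcnt j + 1) D`, plus `k - 1` boundary
pumps); moreover `∑ n j ≥ ⌈(∑ L j) γ / (p_max - p_min)⌉ - 1`, the bound for
the undivided route, with equality when every section length is an integer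
multiple of `(p_max - p_min)/γ`. -/
theorem segmentation_pump_count (k : ℕ) (hk : 0 < k)
    (γ pmax pmin : ℝ) (L : Fin k → ℝ) (n : Fin k → ℤ)
    (hγ : 0 < γ) (hpp : pmin < pmax) (hL : ∀ j, 0 < L j)
    (hn : ∀ j : Fin k,
      n j = ⌈L j * γ / (pmax - pmin)⌉ - (if j = (⟨0, hk⟩ : Fin k) then 1 else 0)) :
    ((∀ pcnt : Fin k → ℕ,
        (∀ j, L j ≤ ((pcnt j : ℝ) + 1) * ((pmax - pmin) / γ)) →
        ∑ j, n j ≤ (∑ j, (pcnt j : ℤ)) + ((k : ℤ) - 1)) ∧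
      (∃ pcnt : Fin k → ℕ,
        (∀ j, L j ≤ ((pcnt j : ℝ) + 1) * ((pmax - pmin) / γ)) ∧
        ∑ j, n j = (∑ j, (pcnt j : ℤ)) + ((k : ℤ) - 1))) ∧
      (∑ j, n j ≥ ⌈(∑ j, L j) * γ / (pmax - pmin)⌉ - 1) ∧
      ((∀ j, ∃ m : ℕ, L j = (m : ℝ) * ((pmax - pmin) / γ)) →
        ∑ j, n j = ⌈(∑ j, L j) * γ / (pmax - pmin)⌉ - 1) := by
  have hd : 0 < pmax - pmin := sub_pos.2 hpp
  set x : Fin k → ℝ := fun j => L j * γ / (pmax - pmin) with hx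
  have hx_pos (j : Fin k) : 0 < x j := by have := hL j; positivity
  have hsum : ∑ j, n j = ∑ j, ⌈x j⌉ - 1 := by simp [hn, sum_sub_distrib, hx]
  have hx_sum : (∑ j, L j) * γ / (pmax - pmin) = ∑ j, x j := by rw [sum_mul, sum_div]
  have hfeasible (j : Fin k) (t : ℝ) := le_mul_div_iff_mul_div_le (a := L j) (b := t) hd hγ
  refine ⟨⟨fun pcnt hp => ?_, ⟨fun j => (⌈x j⌉ - 1).toNat, fun j => ?_, ?_⟩⟩, ?_, fun hm => ?_⟩
  · have := Int.sum_ceil_le_sum_add_card univ x pcnt fun j _ => (hfeasible j _).1 (hp j)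
    simp only [card_univ, Fintype.card_fin] at this
    omega
  · refine (hfeasible j _).2 ?_
    have := Int.toNat_ceil_sub_one_add_one (hx_pos j)
    rw [show (((⌈x j⌉ - 1).toNat : ℕ) : ℝ) + 1 = ⌈x j⌉ by exact_mod_cast this]
    exact Int.le_ceil (x j)
  · rw [hsum, ← sum_congr rfl fun j _ => Int.toNat_ceil_sub_one_add_one (hx_pos j),
      sum_add_distrib, sum_const, card_univ, Fintype.card_fin, nsmul_one]
    ring
  · rw [hsum, hx_sum]
    linarith [Int.ceil_sum_le univ x]
  · choose m hm using hm
    have hx_nat (j : Fin k) : x j = m j := by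
      simp only [hx, hm j]
      field_simp
    simp only [hsum, hx_sum, hx_nat, Int.ceil_natCast, ← Nat.cast_sum]
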